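/- Assume b = A x̄ + z, let δ' ∈ (0,1) and γ > (1+δ')/(1−δ'), let s̃ ≥ 1 be an integer with ρ₋(A, s̄+s̃) > 0, and let λ ≥ λ' > 0 both satisfy the noise-domination condition μ ≥ max{4, (γ+1)/((1−δ')γ − (1+δ'))} · ‖Aᵀz‖_∞ (for μ = λ and μ = λ'). Suppose x ∈ ℝⁿ satisfies ‖x_{S̄ᶜ}‖₀ ≤ s̃ and ω_λ(x) ≤ δ'λ, and suppose x' is a minimizer of φ_{λ'} with ‖x'_{S̄ᶜ}‖₀ ≤ s̃. Then φ_{λ'}(x) − φ_{λ'}(x') ≤ 2(1+γ)(λ + λ')(ω_λ(x) + λ − λ') s̄ / ρ₋(A, s̄+s̃). -/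

import Mathlib

/-!
Both `x` and the minimiser `x'` carry subgradients `ξ`, `ξ'` of `‖·‖₁` whose residues
`Aᵀ(Ax - b) + μξ` have sup norm at most `δ'μ`: for `x` this is `ω_λ(x) ≤ δ'λ` (the minimum
defining `ω` is attained), for `x'` the residue vanishes by first-order optimality. For such a
point the Lasso argument applies to `Δ = x - x̄`, which is `(s̄ + s̃)`-sparse: pairing the
residue with `Δ` gives `‖AΔ‖² ≤ (r + ε + μ)‖Δ_S̄‖₁ + (r + ε - μ)‖Δ_S̄ᶜ‖₁` with `ε = ‖Aᵀz‖_∞`,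
the noise condition turns this into the cone condition `‖Δ_S̄ᶜ‖₁ ≤ γ‖Δ_S̄‖₁` together with
`‖AΔ‖² ≤ 2μ‖Δ_S̄‖₁`, and `ρ₋` with Cauchy–Schwarz then gives `‖Δ‖₁ ≤ 2(1 + γ)μ s̄ / ρ₋`.
Finally, convexity bounds `φ_{λ'}(x) - φ_{λ'}(x')` by
`‖∇f(x) + λ'ξ‖_∞ ‖x - x'‖₁ ≤ (ω_λ(x) + λ - λ')(‖x - x̄‖₁ + ‖x' - x̄‖₁)`.
-/

open scoped BigOperators
open Matrix

noncomputable section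

namespace PGH

/-- Euclidean dot product on `Fin n → ℝ`. -/
def dot {n : ℕ} (x y : Fin n → ℝ) : ℝ := ∑ i, x i * y i

/-- Squared Euclidean norm. -/
def sqnorm {n : ℕ} (x : Fin n → ℝ) : ℝ := ∑ i, (x i) ^ 2

/-- Euclidean (ℓ₂) norm. -/
noncomputable def l2 {n : ℕ} (x : Fin n → ℝ) : ℝ := Real.sqrt (sqnorm x)

/-- ℓ₁ norm. -/
def l1 {n : ℕ} (x : Fin n → ℝ) : ℝ := ∑ i, |x i|

/-- ℓ∞ norm (maximum absolute coordinate). -/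
noncomputable def linf {n : ℕ} (x : Fin n → ℝ) : ℝ := ⨆ i, |x i|

/-- Support of a vector. -/
def supp {n : ℕ} (x : Fin n → ℝ) : Finset (Fin n) := Finset.univ.filter (fun i => x i ≠ 0)

/-- Number of nonzero coordinates. -/
def l0 {n : ℕ} (x : Fin n → ℝ) : ℕ := (supp x).card

/-- Number of nonzero coordinates within the index set `S`
(i.e. `‖x_S‖₀` for the restriction of `x` to `S`). -/
def l0on {n : ℕ} (S : Finset (Fin n)) (x : Fin n → ℝ) : ℕ :=
  (S.filter (fun i => x i ≠ 0)).card

/-- ℓ₁ norm of the restriction of `x` to the index set `S`. -/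
def l1on {n : ℕ} (S : Finset (Fin n)) (x : Fin n → ℝ) : ℝ := ∑ i ∈ S, |x i|

/-- Gradient of `f(x) = (1/2)‖Ax - b‖₂²`, namely `Aᵀ(Ax - b)`. -/
def grad {m n : ℕ} (A : Matrix (Fin m) (Fin n) ℝ) (b : Fin m → ℝ) (x : Fin n → ℝ) :
    Fin n → ℝ :=
  Aᵀ.mulVec (A.mulVec x - b)

/-- Least-squares objective `f(x) = (1/2)‖Ax - b‖₂²`. -/
def fls {m n : ℕ} (A : Matrix (Fin m) (Fin n) ℝ) (b : Fin m → ℝ) (x : Fin n → ℝ) : ℝ :=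
  sqnorm (A.mulVec x - b) / 2

/-- ℓ₁-regularized least-squares objective `φ_λ(x) = f(x) + λ‖x‖₁`. -/
def phi {m n : ℕ} (A : Matrix (Fin m) (Fin n) ℝ) (b : Fin m → ℝ) (lam : ℝ)
    (x : Fin n → ℝ) : ℝ :=
  fls A b x + lam * l1 x

/-- Restricted maximal eigenvalue `ρ₊(A, s)`. -/
noncomputable def rhoPlus {m n : ℕ} (A : Matrix (Fin m) (Fin n) ℝ) (s : ℕ) : ℝ :=
  sSup {r | ∃ x : Fin n → ℝ, x ≠ 0 ∧ l0 x ≤ s ∧ r = sqnorm (A.mulVec x) / sqnorm x}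

/-- Restricted minimal eigenvalue `ρ₋(A, s)`. -/
noncomputable def rhoMinus {m n : ℕ} (A : Matrix (Fin m) (Fin n) ℝ) (s : ℕ) : ℝ :=
  sInf {r | ∃ x : Fin n → ℝ, x ≠ 0 ∧ l0 x ≤ s ∧ r = sqnorm (A.mulVec x) / sqnorm x}

/-- `ξ` is a subgradient of the ℓ₁ norm at `x`. -/
def IsSubgrad {n : ℕ} (x ξ : Fin n → ℝ) : Prop :=
  ∀ i, (x i ≠ 0 → ξ i = Real.sign (x i)) ∧ (x i = 0 → |ξ i| ≤ 1)

/-- Optimality residue `ω_λ(x) = min_{ξ ∈ ∂‖x‖₁} ‖Aᵀ(Ax−b) + λξ‖_∞`. -/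
noncomputable def omega {m n : ℕ} (A : Matrix (Fin m) (Fin n) ℝ) (b : Fin m → ℝ)
    (lam : ℝ) (x : Fin n → ℝ) : ℝ :=
  sInf {r | ∃ ξ : Fin n → ℝ, IsSubgrad x ξ ∧
    r = linf (fun i => grad A b x i + lam * ξ i)}

/-- The local model `ψ_{λ,L}(y; x)`. -/
def psi {m n : ℕ} (A : Matrix (Fin m) (Fin n) ℝ) (b : Fin m → ℝ) (lam L : ℝ)
    (y x : Fin n → ℝ) : ℝ :=
  fls A b y + dot (grad A b y) (x - y) + L / 2 * sqnorm (x - y) + lam * l1 x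

/-- The noise-domination condition
`λ ≥ max{4, (γ+1)/((1−δ')γ−(1+δ'))} ⬝ ‖Aᵀz‖_∞`. -/
def noiseCond {m n : ℕ} (A : Matrix (Fin m) (Fin n) ℝ) (z : Fin m → ℝ)
    (dp gam lam : ℝ) : Prop :=
  lam ≥ max 4 ((gam + 1) / ((1 - dp) * gam - (1 + dp))) * linf (Aᵀ.mulVec z)

section Vectors

variable {n : ℕ}

lemma sqnorm_eq_dotProduct (x : Fin n → ℝ) : sqnorm x = x ⬝ᵥ x := by
  simp only [sqnorm, dotProduct, sq]

lemma sqnorm_nonneg (x : Fin n → ℝ) : 0 ≤ sqnorm x :=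
  Finset.sum_nonneg fun _ _ => sq_nonneg _

lemma sqnorm_smul (c : ℝ) (x : Fin n → ℝ) : sqnorm (c • x) = c ^ 2 * sqnorm x := by
  simp only [sqnorm, Finset.mul_sum, Pi.smul_apply, smul_eq_mul, mul_pow]

lemma l1_nonneg (x : Fin n → ℝ) : 0 ≤ l1 x :=
  Finset.sum_nonneg fun _ _ => abs_nonneg _

lemma l1on_nonneg (S : Finset (Fin n)) (x : Fin n → ℝ) : 0 ≤ l1on S x :=
  Finset.sum_nonneg fun _ _ => abs_nonneg _

lemma l1_eq_l1on_add_l1on_compl (S : Finset (Fin n)) (x : Fin n → ℝ) :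
    l1 x = l1on S x + l1on Sᶜ x :=
  (Finset.sum_add_sum_compl S _).symm

lemma l1_sub_le_add (x y z : Fin n → ℝ) : l1 (x - y) ≤ l1 (x - z) + l1 (y - z) := by
  simp only [l1, ← Finset.sum_add_distrib, Pi.sub_apply]
  exact Finset.sum_le_sum fun i _ => (abs_sub_le _ _ _).trans_eq (by rw [abs_sub_comm (z i)])

lemma abs_le_linf (x : Fin n → ℝ) (i : Fin n) : |x i| ≤ linf x :=
  le_ciSup (f := fun j => |x j|) (Set.finite_range _).bddAbove i

lemma linf_nonneg (x : Fin n → ℝ) : 0 ≤ linf x :=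
  Real.iSup_nonneg fun _ => abs_nonneg _

lemma linf_le {x : Fin n → ℝ} {c : ℝ} (hc : 0 ≤ c) (h : ∀ i, |x i| ≤ c) : linf x ≤ c :=
  Real.iSup_le h hc

lemma dotProduct_add_mul (u w v : Fin n → ℝ) (c : ℝ) :
    (fun i => u i + c * w i) ⬝ᵥ v = u ⬝ᵥ v + c * (w ⬝ᵥ v) := by
  simp only [dotProduct, Finset.mul_sum, ← Finset.sum_add_distrib]
  exact Finset.sum_congr rfl fun i _ => by ring

lemma abs_dotProduct_le_linf_mul_l1 (u v : Fin n → ℝ) : |u ⬝ᵥ v| ≤ linf u * l1 v := by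
  rw [l1, Finset.mul_sum]
  refine (Finset.abs_sum_le_sum_abs _ _).trans (Finset.sum_le_sum fun i _ => ?_)
  rw [abs_mul]
  exact mul_le_mul_of_nonneg_right (abs_le_linf u i) (abs_nonneg _)

lemma sq_l1on_le_card_mul_sqnorm (S : Finset (Fin n)) (x : Fin n → ℝ) :
    l1on S x ^ 2 ≤ S.card * sqnorm x :=
  calc l1on S x ^ 2 ≤ S.card * ∑ i ∈ S, |x i| ^ 2 := sq_sum_le_card_mul_sum_sq
    _ = S.card * ∑ i ∈ S, x i ^ 2 := by simp only [sq_abs]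
    _ ≤ S.card * sqnorm x := by
      gcongr
      exact Finset.sum_le_sum_of_subset_of_nonneg (Finset.subset_univ S)
        fun i _ _ => sq_nonneg _

lemma l0_sub_le (x y : Fin n → ℝ) : l0 (x - y) ≤ (supp y).card + l0on (supp y)ᶜ x := by
  have hsub : supp (x - y) ⊆ supp y ∪ (supp y)ᶜ.filter (fun i => x i ≠ 0) := by
    intro i hi
    by_cases hy : y i = 0
    · simp_all [supp]
    · simp [supp, hy]
  exact (Finset.card_le_card hsub).trans (Finset.card_union_le _ _)

lemma l1on_compl_sub_l1on_le (x y : Fin n → ℝ) :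
    l1on (supp y)ᶜ (x - y) - l1on (supp y) (x - y) ≤ l1 x - l1 y := by
  have hcompl : l1on (supp y)ᶜ (x - y) = l1on (supp y)ᶜ x := by
    refine Finset.sum_congr rfl fun i hi => ?_
    have : y i = 0 := by simpa [supp] using hi
    simp [this]
  have hy : l1on (supp y)ᶜ y = 0 :=
    Finset.sum_eq_zero fun i hi => by simpa [supp] using hi
  have hon : l1on (supp y) y - l1on (supp y) x ≤ l1on (supp y) (x - y) := by
    simp only [l1on, ← Finset.sum_sub_distrib]
    exact Finset.sum_le_sum fun i _ => by
      simpa only [Pi.sub_apply, abs_sub_comm (x i)] using abs_sub_abs_le_abs_sub (y i) (x i)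
  rw [l1_eq_l1on_add_l1on_compl (supp y) x, l1_eq_l1on_add_l1on_compl (supp y) y, hcompl, hy]
  linarith

end Vectors

namespace IsSubgrad

variable {n : ℕ} {x ξ : Fin n → ℝ}

lemma abs_le_one (h : IsSubgrad x ξ) (i : Fin n) : |ξ i| ≤ 1 := by
  by_cases hx : x i = 0
  · exact (h i).2 hx
  · rw [(h i).1 hx]
    rcases (Ne.lt_or_gt hx) with hneg | hpos
    · simp [Real.sign_of_neg hneg]
    · simp [Real.sign_of_pos hpos]

lemma mul_eq_abs (h : IsSubgrad x ξ) (i : Fin n) : ξ i * x i = |x i| := by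
  by_cases hx : x i = 0
  · simp [hx]
  · rw [(h i).1 hx]
    rcases (Ne.lt_or_gt hx) with hneg | hpos
    · rw [Real.sign_of_neg hneg, abs_of_neg hneg]; ring
    · rw [Real.sign_of_pos hpos, abs_of_pos hpos]; ring

lemma l1_add_dotProduct_le (h : IsSubgrad x ξ) (y : Fin n → ℝ) :
    l1 x + ξ ⬝ᵥ (y - x) ≤ l1 y := by
  simp only [l1, dotProduct, ← Finset.sum_add_distrib]
  refine Finset.sum_le_sum fun i _ => ?_
  have hy : ξ i * y i ≤ |y i| :=
    (le_abs_self _).trans ((abs_mul _ _).trans_le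
      (mul_le_of_le_one_left (abs_nonneg _) (h.abs_le_one i)))
  have := h.mul_eq_abs i
  simp only [Pi.sub_apply]
  linarith

lemma linf_le_add (h : IsSubgrad x ξ) (g : Fin n → ℝ) {lam lam' : ℝ} (hle : lam' ≤ lam) :
    linf (fun i => g i + lam' * ξ i) ≤ linf (fun i => g i + lam * ξ i) + (lam - lam') := by
  refine linf_le (add_nonneg (linf_nonneg _) (sub_nonneg.2 hle)) fun i => ?_
  have hξ : |(lam - lam') * ξ i| ≤ lam - lam' := by
    rw [abs_mul, abs_of_nonneg (sub_nonneg.2 hle)]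
    exact mul_le_of_le_one_right (sub_nonneg.2 hle) (h.abs_le_one i)
  calc |g i + lam' * ξ i| = |(g i + lam * ξ i) - (lam - lam') * ξ i| := by ring_nf
    _ ≤ |g i + lam * ξ i| + |(lam - lam') * ξ i| := abs_sub _ _
    _ ≤ linf (fun i => g i + lam * ξ i) + (lam - lam') :=
      add_le_add (abs_le_linf (fun i => g i + lam * ξ i) i) hξ

end IsSubgrad

section LeastSquares

variable {m n : ℕ} (A : Matrix (Fin m) (Fin n) ℝ) (b : Fin m → ℝ)

lemma grad_dotProduct (x d : Fin n → ℝ) : grad A b x ⬝ᵥ d = (A *ᵥ x - b) ⬝ᵥ (A *ᵥ d) := by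
  rw [grad, mulVec_transpose, dotProduct_mulVec]

lemma fls_add (x d : Fin n → ℝ) :
    fls A b (x + d) = fls A b x + grad A b x ⬝ᵥ d + sqnorm (A *ᵥ d) / 2 := by
  have : A *ᵥ (x + d) - b = (A *ᵥ x - b) + A *ᵥ d := by rw [mulVec_add]; abel
  simp only [fls, sqnorm_eq_dotProduct, grad_dotProduct, this, dotProduct_add, add_dotProduct,
    dotProduct_comm (A *ᵥ d) (A *ᵥ x - b)]
  ring

lemma fls_add_grad_dotProduct_le (x y : Fin n → ℝ) :
    fls A b x + grad A b x ⬝ᵥ (y - x) ≤ fls A b y := by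
  have h := fls_add A b x (y - x)
  rw [add_sub_cancel] at h
  linarith [sqnorm_nonneg (A *ᵥ (y - x))]

lemma phi_sub_le_of_isSubgrad {lam : ℝ} (hlam : 0 ≤ lam) {x ξ : Fin n → ℝ}
    (hξ : IsSubgrad x ξ) (y : Fin n → ℝ) :
    phi A b lam x - phi A b lam y ≤ (fun i => grad A b x i + lam * ξ i) ⬝ᵥ (x - y) := by
  have hf := fls_add_grad_dotProduct_le A b x y
  have hl := mul_le_mul_of_nonneg_left (hξ.l1_add_dotProduct_le y) hlam
  rw [← neg_sub x y, dotProduct_neg] at hf hl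
  rw [phi, phi, dotProduct_add_mul]
  linarith

lemma grad_dotProduct_sub_eq {xbar : Fin n → ℝ} {z : Fin m → ℝ} (hb : b = A *ᵥ xbar + z)
    (x : Fin n → ℝ) :
    grad A b x ⬝ᵥ (x - xbar) = sqnorm (A *ᵥ (x - xbar)) - Aᵀ *ᵥ z ⬝ᵥ (x - xbar) := by
  have : A *ᵥ x - b = A *ᵥ (x - xbar) - z := by rw [hb, mulVec_sub]; abel
  rw [grad_dotProduct, this, sqnorm_eq_dotProduct, mulVec_transpose, ← dotProduct_mulVec,
    sub_dotProduct, dotProduct_comm z]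

lemma rhoMinus_mul_sqnorm_le {s : ℕ} {w : Fin n → ℝ} (hw : l0 w ≤ s) :
    rhoMinus A s * sqnorm w ≤ sqnorm (A *ᵥ w) := by
  rcases eq_or_ne w 0 with rfl | hw0
  · simp [sqnorm]
  have hpos : 0 < sqnorm w := by
    obtain ⟨i, hi⟩ := Function.ne_iff.1 hw0
    exact lt_of_lt_of_le (pow_pos (abs_pos.2 hi) 2 |>.trans_eq (sq_abs _))
      (Finset.single_le_sum (f := fun j => w j ^ 2) (fun j _ => sq_nonneg _)
        (Finset.mem_univ i))
  have hbdd : BddBelow {r | ∃ x : Fin n → ℝ, x ≠ 0 ∧ l0 x ≤ s ∧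
      r = sqnorm (A *ᵥ x) / sqnorm x} :=
    ⟨0, by rintro r ⟨y, -, -, rfl⟩; exact div_nonneg (sqnorm_nonneg _) (sqnorm_nonneg _)⟩
  rw [← le_div_iff₀ hpos]
  exact csInf_le hbdd ⟨w, hw0, hw, rfl⟩

end LeastSquares

section Optimality

lemma abs_max_min_sub_le {p c : ℝ} (hc : |c| ≤ 1) : |max (-1) (min 1 p) - p| ≤ |c - p| := by
  obtain ⟨hc₁, hc₂⟩ := abs_le.1 hc
  rcases le_total p (-1) with hp | hp
  · rw [min_eq_right (by linarith), max_eq_left hp, abs_of_nonneg (by linarith),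
      abs_of_nonneg (by linarith)]
    linarith
  rcases le_total p 1 with hp' | hp'
  · rw [min_eq_right hp', max_eq_right hp, sub_self, abs_zero]
    exact abs_nonneg _
  · rw [min_eq_left hp', max_eq_right (by norm_num), abs_of_nonpos (by linarith),
      abs_of_nonpos (by linarith)]
    linarith

lemma abs_add_of_abs_le {a t : ℝ} (ht : |t| ≤ |a|) : |a + t| = |a| + Real.sign a * t := by
  rcases lt_trichotomy a 0 with ha | rfl | ha
  · rw [abs_of_neg ha] at ht
    rw [abs_of_neg ha, Real.sign_of_neg ha, abs_of_nonpos (by linarith [le_abs_self t])]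
    ring
  · simp_all
  · rw [abs_of_pos ha] at ht
    rw [abs_of_pos ha, Real.sign_of_pos ha, abs_of_nonneg (by linarith [neg_abs_le t])]
    ring

lemma nonneg_of_forall_pos_le {u c δ : ℝ} (hδ : 0 < δ)
    (h : ∀ t, 0 < t → t ≤ δ → 0 ≤ t * u + c * t ^ 2) : 0 ≤ u := by
  have hlim : Filter.Tendsto (fun t => u + c * t) (nhdsWithin 0 (Set.Ioi 0)) (nhds u) := by
    have : Continuous fun t : ℝ => u + c * t := by fun_prop
    simpa using (this.tendsto 0).mono_left nhdsWithin_le_nhds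
  refine ge_of_tendsto hlim ?_
  filter_upwards [Ioc_mem_nhdsGT hδ] with t ht
  refine nonneg_of_mul_nonneg_right ?_ ht.1
  linarith [h t ht.1 ht.2]

/-- First-order condition at `t = 0` for `t ↦ g t + c t² + λ |a + t|`. -/
lemma sign_cond_of_forall_nonneg {a g c lam : ℝ}
    (h : ∀ t, 0 ≤ g * t + c * t ^ 2 + lam * (|a + t| - |a|)) :
    (a ≠ 0 → g + lam * Real.sign a = 0) ∧ (a = 0 → |g| ≤ lam) := by
  constructor
  · intro ha
    have key (s : ℝ) (hs : |s| = 1) : 0 ≤ s * (g + lam * Real.sign a) :=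
      nonneg_of_forall_pos_le (c := c) (abs_pos.2 ha) fun t ht htδ => by
        have hst : |s * t| ≤ |a| := by rwa [abs_mul, hs, one_mul, abs_of_pos ht]
        have := h (s * t)
        rw [abs_add_of_abs_le hst, mul_pow, ← sq_abs s, hs, one_pow, one_mul] at this
        linarith
    linarith [key 1 (by norm_num), key (-1) (by norm_num)]
  · rintro rfl
    have key (s : ℝ) (hs : |s| = 1) : 0 ≤ s * g + lam :=
      nonneg_of_forall_pos_le (c := c) one_pos fun t ht _ => by
        have := h (s * t)
        rw [zero_add, abs_zero, sub_zero, abs_mul, hs, one_mul, abs_of_pos ht, mul_pow,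
          ← sq_abs s, hs, one_pow, one_mul] at this
        linarith
    exact abs_le.2 ⟨by linarith [key 1 (by norm_num)], by linarith [key (-1) (by norm_num)]⟩

variable {m n : ℕ} (A : Matrix (Fin m) (Fin n) ℝ) (b : Fin m → ℝ)

lemma omega_nonneg (lam : ℝ) (x : Fin n → ℝ) : 0 ≤ omega A b lam x :=
  Real.sInf_nonneg (by rintro r ⟨ξ, -, rfl⟩; exact linf_nonneg _)

/-- The minimum defining `omega` is attained: off the support of `x`, clamp `-gᵢ / λ`
to `[-1, 1]`. -/
lemma exists_isSubgrad_linf_le_omega {lam : ℝ} (hlam : 0 < lam) (x : Fin n → ℝ) :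
    ∃ ξ, IsSubgrad x ξ ∧ linf (fun i => grad A b x i + lam * ξ i) ≤ omega A b lam x := by
  let ξ : Fin n → ℝ := fun i =>
    if x i = 0 then max (-1) (min 1 (-grad A b x i / lam)) else Real.sign (x i)
  have hξ : IsSubgrad x ξ := fun i =>
    ⟨fun hx => if_neg hx, fun hx => by
      simp only [ξ, if_pos hx]
      exact abs_le.2 ⟨le_max_left _ _, max_le (by norm_num) (min_le_left _ _)⟩⟩
  refine ⟨ξ, hξ, le_csInf ⟨_, ξ, hξ, rfl⟩ ?_⟩
  rintro r ⟨η, hη, rfl⟩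
  refine linf_le (linf_nonneg _) fun i => le_trans ?_ (abs_le_linf _ i)
  by_cases hx : x i = 0
  · have hscale (t : ℝ) : grad A b x i + lam * t = lam * (t - -grad A b x i / lam) := by
      field_simp
      ring
    simp only [ξ, if_pos hx]
    rw [hscale, hscale, abs_mul, abs_mul]
    exact mul_le_mul_of_nonneg_left (abs_max_min_sub_le (hη.abs_le_one i)) (abs_nonneg _)
  · simp only [ξ, if_neg hx, (hη i).1 hx, le_refl]

lemma phi_add_single (lam : ℝ) (x : Fin n → ℝ) (i : Fin n) (t : ℝ) :
    phi A b lam (x + Pi.single i t) = phi A b lam x + (grad A b x i * t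
      + sqnorm (A *ᵥ Pi.single i 1) / 2 * t ^ 2 + lam * (|x i + t| - |x i|)) := by
  have hl1 : l1 (x + Pi.single i t) - l1 x = |x i + t| - |x i| := by
    rw [l1, l1, ← Finset.sum_sub_distrib,
      Finset.sum_eq_single i (fun j _ hj => by simp [hj]) (by simp)]
    simp
  have hcol : A *ᵥ Pi.single i t = t • A *ᵥ Pi.single i 1 := by
    rw [← mulVec_smul, ← Pi.single_smul, smul_eq_mul, mul_one]
  rw [phi, phi, fls_add, dotProduct_single, hcol, sqnorm_smul]
  linear_combination lam * hl1

lemma exists_isSubgrad_grad_add_eq_zero {lam : ℝ} (hlam : 0 < lam) {x : Fin n → ℝ}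
    (hmin : ∀ u, phi A b lam x ≤ phi A b lam u) :
    ∃ ξ, IsSubgrad x ξ ∧ ∀ i, grad A b x i + lam * ξ i = 0 := by
  have hcond (i : Fin n) : (x i ≠ 0 → grad A b x i + lam * Real.sign (x i) = 0) ∧
      (x i = 0 → |grad A b x i| ≤ lam) :=
    sign_cond_of_forall_nonneg (c := sqnorm (A *ᵥ Pi.single i 1) / 2) fun t => by
      have := hmin (x + Pi.single i t)
      rw [phi_add_single] at this
      linarith
  refine ⟨fun i => -grad A b x i / lam, fun i => ⟨fun hx => ?_, fun hx => ?_⟩, fun i => ?_⟩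
  · have := (hcond i).1 hx
    field_simp
    linarith
  · rw [abs_div, abs_neg, abs_of_pos hlam, div_le_one hlam]
    exact (hcond i).2 hx
  · field_simp
    ring

end Optimality

section ErrorBound

lemma cone_and_le_two_mul {μ γ δ ε r Q aS aC : ℝ} (hμ : 0 < μ) (hγ : 0 < γ + 1)
    (hε : ε * (γ + 1) ≤ μ * ((1 - δ) * γ - (1 + δ))) (hr : r ≤ δ * μ) (hQ : 0 ≤ Q)
    (haS : 0 ≤ aS) (haC : 0 ≤ aC) (h : Q ≤ (r + ε + μ) * aS + (r + ε - μ) * aC) :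
    aC ≤ γ * aS ∧ Q ≤ 2 * μ * aS := by
  set k := μ - r - ε
  have hk : 2 * μ ≤ k * (γ + 1) := by nlinarith [mul_le_mul_of_nonneg_right hr hγ.le]
  have hk0 : 0 < k := pos_of_mul_pos_left (by linarith) hγ.le
  refine ⟨le_of_mul_le_mul_left ?_ hk0, by nlinarith⟩
  nlinarith

lemma noiseCond.linf_mul_le {m n : ℕ} {A : Matrix (Fin m) (Fin n) ℝ} {z : Fin m → ℝ}
    {dp gam μ : ℝ} (h : noiseCond A z dp gam μ) (hD : 0 < (1 - dp) * gam - (1 + dp)) :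
    linf (Aᵀ *ᵥ z) * (gam + 1) ≤ μ * ((1 - dp) * gam - (1 + dp)) := by
  have := (mul_le_mul_of_nonneg_right (le_max_right _ _) (linf_nonneg _)).trans h
  rwa [div_mul_eq_mul_div, div_le_iff₀ hD, mul_comm (gam + 1)] at this

variable {m n : ℕ} (A : Matrix (Fin m) (Fin n) ℝ) (b : Fin m → ℝ)

lemma sqnorm_mulVec_sub_le {xbar : Fin n → ℝ} {z : Fin m → ℝ} (hb : b = A *ᵥ xbar + z)
    {μ : ℝ} (hμ : 0 ≤ μ) {x ξ : Fin n → ℝ} (hξ : IsSubgrad x ξ) :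
    sqnorm (A *ᵥ (x - xbar)) ≤
      (linf (fun i => grad A b x i + μ * ξ i) + linf (Aᵀ *ᵥ z) + μ) * l1on (supp xbar) (x - xbar)
      + (linf (fun i => grad A b x i + μ * ξ i) + linf (Aᵀ *ᵥ z) - μ)
        * l1on (supp xbar)ᶜ (x - xbar) := by
  have hres := (le_abs_self _).trans
    (abs_dotProduct_le_linf_mul_l1 (fun i => grad A b x i + μ * ξ i) (x - xbar))
  have hnoise := (le_abs_self _).trans (abs_dotProduct_le_linf_mul_l1 (Aᵀ *ᵥ z) (x - xbar))
  have hsub : l1 x - l1 xbar ≤ ξ ⬝ᵥ (x - xbar) := by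
    have := hξ.l1_add_dotProduct_le xbar
    rw [← neg_sub, dotProduct_neg] at this
    linarith
  have hcone := mul_le_mul_of_nonneg_left ((l1on_compl_sub_l1on_le x xbar).trans hsub) hμ
  rw [dotProduct_add_mul, grad_dotProduct_sub_eq A b hb] at hres
  rw [l1_eq_l1on_add_l1on_compl (supp xbar)] at hres hnoise
  nlinarith

lemma l1_sub_le_of_linf_le {xbar : Fin n → ℝ} {z : Fin m → ℝ} (hb : b = A *ᵥ xbar + z)
    {dp gam μ : ℝ} (hγ : 0 < gam + 1) (hD : 0 < (1 - dp) * gam - (1 + dp)) (hμ : 0 < μ)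
    (hnoise : noiseCond A z dp gam μ) {st : ℕ} (hρ : 0 < rhoMinus A ((supp xbar).card + st))
    {x ξ : Fin n → ℝ} (hxsp : l0on (supp xbar)ᶜ x ≤ st) (hξ : IsSubgrad x ξ)
    (hres : linf (fun i => grad A b x i + μ * ξ i) ≤ dp * μ) :
    l1 (x - xbar) ≤
      2 * (1 + gam) * μ * (supp xbar).card / rhoMinus A ((supp xbar).card + st) := by
  set ρ := rhoMinus A ((supp xbar).card + st)
  set s : ℝ := ((supp xbar).card : ℝ)
  set aS := l1on (supp xbar) (x - xbar)
  have haS0 : 0 ≤ aS := l1on_nonneg _ _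
  obtain ⟨hcone, hQ⟩ := cone_and_le_two_mul hμ hγ (hnoise.linf_mul_le hD) hres
    (sqnorm_nonneg _) haS0 (l1on_nonneg _ _) (sqnorm_mulVec_sub_le A b hb hμ.le hξ)
  have hρQ : ρ * sqnorm (x - xbar) ≤ sqnorm (A *ᵥ (x - xbar)) :=
    rhoMinus_mul_sqnorm_le A ((l0_sub_le x xbar).trans (by omega))
  have hCS : aS ^ 2 ≤ s * sqnorm (x - xbar) := sq_l1on_le_card_mul_sqnorm _ _
  have haS : aS ≤ 2 * μ * s / ρ := by
    rw [le_div_iff₀ hρ]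
    rcases haS0.eq_or_lt with h0 | h0
    · rw [← h0, zero_mul]
      positivity
    refine le_of_mul_le_mul_left ?_ h0
    have hs : 0 ≤ s := Nat.cast_nonneg _
    nlinarith [mul_le_mul_of_nonneg_left hCS hρ.le, mul_le_mul_of_nonneg_left hρQ hs,
      mul_le_mul_of_nonneg_left hQ hs]
  rw [l1_eq_l1on_add_l1on_compl (supp xbar)]
  calc aS + l1on (supp xbar)ᶜ (x - xbar) ≤ (1 + gam) * aS := by linarith
    _ ≤ (1 + gam) * (2 * μ * s / ρ) := by gcongr; linarith
    _ = 2 * (1 + gam) * μ * s / ρ := by ring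

end ErrorBound

theorem stmt7_general {m n : ℕ} (A : Matrix (Fin m) (Fin n) ℝ) (b : Fin m → ℝ)
    (xbar : Fin n → ℝ) (z : Fin m → ℝ) (hb : b = A.mulVec xbar + z)
    (dp gam : ℝ) (hdp0 : 0 < dp) (hdp1 : dp < 1)
    (hgam : gam > (1 + dp) / (1 - dp))
    (st : ℕ)
    (hrho : 0 < rhoMinus A ((supp xbar).card + st))
    (lam lam' : ℝ) (hlam' : 0 < lam') (hle : lam' ≤ lam)
    (hnoise : noiseCond A z dp gam lam) (hnoise' : noiseCond A z dp gam lam')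
    (x : Fin n → ℝ) (hxsp : l0on (supp xbar)ᶜ x ≤ st)
    (hx : omega A b lam x ≤ dp * lam)
    (x' : Fin n → ℝ) (hmin : ∀ u, phi A b lam' x' ≤ phi A b lam' u)
    (hx'sp : l0on (supp xbar)ᶜ x' ≤ st) :
    phi A b lam' x - phi A b lam' x' ≤
      2 * (1 + gam) * (lam + lam') * (omega A b lam x + lam - lam') *
        ((supp xbar).card : ℝ) / rhoMinus A ((supp xbar).card + st) := by
  have hlam : 0 < lam := hlam'.trans_le hle
  have hD : 0 < (1 - dp) * gam - (1 + dp) := by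
    have := (div_lt_iff₀ (sub_pos.2 hdp1)).1 hgam
    linarith
  have hγ : 0 < gam + 1 := by nlinarith
  obtain ⟨ξ, hξ, hres⟩ := exists_isSubgrad_linf_le_omega A b hlam x
  obtain ⟨ξ', hξ', hstat⟩ := exists_isSubgrad_grad_add_eq_zero A b hlam' hmin
  have herr := l1_sub_le_of_linf_le A b hb hγ hD hlam hnoise hrho hxsp hξ (hres.trans hx)
  have herr' := l1_sub_le_of_linf_le A b hb hγ hD hlam' hnoise' hrho hx'sp hξ' <|
    linf_le (mul_nonneg hdp0.le hlam'.le) fun i => by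
      rw [hstat i, abs_zero]
      exact mul_nonneg hdp0.le hlam'.le
  have hK : 0 ≤ omega A b lam x + (lam - lam') := by linarith [omega_nonneg A b lam x]
  calc phi A b lam' x - phi A b lam' x'
      ≤ (fun i => grad A b x i + lam' * ξ i) ⬝ᵥ (x - x') :=
        phi_sub_le_of_isSubgrad A b hlam'.le hξ x'
    _ ≤ (omega A b lam x + (lam - lam')) * (l1 (x - xbar) + l1 (x' - xbar)) :=
        (le_abs_self _).trans <| (abs_dotProduct_le_linf_mul_l1 _ _).trans <|
          mul_le_mul ((hξ.linf_le_add _ hle).trans (by linarith)) (l1_sub_le_add x x' xbar)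
            (l1_nonneg _) hK
    _ ≤ (omega A b lam x + (lam - lam')) *
        (2 * (1 + gam) * lam * (supp xbar).card / rhoMinus A ((supp xbar).card + st)
          + 2 * (1 + gam) * lam' * (supp xbar).card / rhoMinus A ((supp xbar).card + st)) := by
      gcongr
    _ = _ := by ring

theorem stmt7 {m n : ℕ} (A : Matrix (Fin m) (Fin n) ℝ) (b : Fin m → ℝ)
    (xbar : Fin n → ℝ) (z : Fin m → ℝ) (hb : b = A.mulVec xbar + z)
    (dp gam : ℝ) (hdp0 : 0 < dp) (hdp1 : dp < 1)
    (hgam : gam > (1 + dp) / (1 - dp))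
    (st : ℕ) (hst : 1 ≤ st)
    (hrho : 0 < rhoMinus A ((supp xbar).card + st))
    (lam lam' : ℝ) (hlam' : 0 < lam') (hle : lam' ≤ lam)
    (hnoise : noiseCond A z dp gam lam) (hnoise' : noiseCond A z dp gam lam')
    (x : Fin n → ℝ) (hxsp : l0on (supp xbar)ᶜ x ≤ st)
    (hx : omega A b lam x ≤ dp * lam)
    (x' : Fin n → ℝ) (hmin : ∀ u, phi A b lam' x' ≤ phi A b lam' u)
    (hx'sp : l0on (supp xbar)ᶜ x' ≤ st) :
    phi A b lam' x - phi A b lam' x' ≤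
      2 * (1 + gam) * (lam + lam') * (omega A b lam x + lam - lam') *
        ((supp xbar).card : ℝ) / rhoMinus A ((supp xbar).card + st) :=
  stmt7_general A b xbar z hb dp gam hdp0 hdp1 hgam st hrho lam lam' hlam' hle hnoise hnoise' x hxsp
    hx x' hmin hx'sp

end PGH
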